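/- arXiv:2401.07996 — 3 statements merged into one kernel-verified Lean document; each statement's English description precedes it below -/
import Mathlib

section
/- For every n ≥ 1 there exists a pushdown automaton with 3n+2 states and two stack symbols whose language, over an alphabet Γ₂ of input letters, is exactly the set of words over Γ₂ of length 2^n (that is, Γ₂^{2^n}); moreover along any accepting run the stack height never exceeds n. -/
/-! The automaton counts to `2 ^ n` along the recursion `2 ^ (k + 1) = 2 ^ k + 2 ^ k`: in state
`down (k + 1)` it pushes `0`, reads a block of `2 ^ k` letters (ending in `up k`), trades the `0`
for a `1` via `turn k`, reads a second block, pops the `1` and lands in `up (k + 1)`; at level `0`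
it reads a single letter. The stack is thus a binary counter of unfinished first halves, and the
number of letters a configuration still owes is a potential that every transition lowers by
exactly the letters it reads, which forces accepted words to have length `2 ^ n`. In every
configuration reachable from `down n` with empty stack the stack length is `n` minus the level,
which bounds the height. -/

/-- A stack operation of a pushdown automaton. -/
inductive StackOp (Γ : Type*) where
  | push (γ : Γ)
  | pop (γ : Γ)
  | nop

/-- The effect of a stack operation: `op.apply s s'` means performing `op`
on stack `s` yields stack `s'`. -/
def StackOp.apply {Γ : Type*} : StackOp Γ → List Γ → List Γ → Prop
  | .push γ, s, s' => s' = γ :: s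
  | .pop γ, s, s' => s = γ :: s'
  | .nop, s, s' => s' = s

/-- A pushdown automaton with states `Q`, stack symbols `Γ` and input alphabet `σ`.
Transitions read a letter or `ε` (`Option σ`) and perform one stack operation. -/
structure PDA (Q Γ σ : Type*) where
  trans : Set (Q × Option σ × StackOp Γ × Q)
  start : Q
  final : Set Q

/-- `P.Steps c w c' h` : there is a run of `P` from configuration `c` to `c'`
reading the word `w`, whose maximal stack height (over all configurations
of the run, endpoints included) is `h`. -/
inductive PDA.Steps {Q Γ σ : Type*} (P : PDA Q Γ σ) :
    Q × List Γ → List σ → Q × List Γ → ℕ → Prop where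
  | refl (c : Q × List Γ) : PDA.Steps P c [] c c.2.length
  | step {q q' : Q} {a : Option σ} {op : StackOp Γ} {s s' : List Γ}
      {w : List σ} {c : Q × List Γ} {h : ℕ} :
      (q, a, op, q') ∈ P.trans → op.apply s s' →
      PDA.Steps P (q', s') w c h →
      PDA.Steps P (q, s) (a.toList ++ w) c (max s.length h)

/-- The language of a PDA: acceptance by final state and empty stack,
starting from the initial state with empty stack. -/
def PDA.language {Q Γ σ : Type*} (P : PDA Q Γ σ) : Set (List σ) :=
  {w | ∃ f ∈ P.final, ∃ h, P.Steps (P.start, []) w (f, []) h}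

namespace PDA

variable {Q Q' Γ σ : Type*} {P : PDA Q Γ σ}

theorem Steps.start_length_le {c d : Q × List Γ} {w : List σ} {h : ℕ} (hs : P.Steps c w d h) :
    c.2.length ≤ h := by
  cases hs with
  | refl => exact le_rfl
  | step => exact le_max_left _ _

theorem Steps.trans {c d e : Q × List Γ} {w w' : List σ} {h h' : ℕ}
    (h₁ : P.Steps c w d h) (h₂ : P.Steps d w' e h') :
    P.Steps c (w ++ w') e (max h h') := by
  induction h₁ with
  | refl c => simpa [max_eq_right h₂.start_length_le] using h₂
  | step ht ha _ ih => simpa [max_assoc] using Steps.step ht ha (ih h₂)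

theorem Steps.height_le_of_invariant (Inv : Q × List Γ → Prop)
    (hInv : ∀ q a op q' s s', (q, a, op, q') ∈ P.trans → op.apply s s' →
      Inv (q, s) → Inv (q', s'))
    {m : ℕ} (hm : ∀ c, Inv c → c.2.length ≤ m)
    {c d : Q × List Γ} {w : List σ} {h : ℕ} (hs : P.Steps c w d h) (hc : Inv c) : h ≤ m := by
  induction hs with
  | refl c => exact hm c hc
  | step ht ha _ ih => exact max_le (hm _ hc) (ih (hInv _ _ _ _ _ _ ht ha hc))

theorem Steps.potential_eq_length_add (pot : Q × List Γ → ℕ)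
    (hpot : ∀ q a op q' s s', (q, a, op, q') ∈ P.trans → op.apply s s' →
      pot (q, s) = a.toList.length + pot (q', s'))
    {c d : Q × List Γ} {w : List σ} {h : ℕ} (hs : P.Steps c w d h) :
    pot c = w.length + pot d := by
  induction hs with
  | refl => simp
  | step ht ha _ ih =>
    rw [hpot _ _ _ _ _ _ ht ha, ih, List.length_append]
    ring

def comap (P : PDA Q Γ σ) (g : Q' → Q) (start : Q') : PDA Q' Γ σ where
  trans := {t | (g t.1, t.2.1, t.2.2.1, g t.2.2.2) ∈ P.trans}
  start := start
  final := g ⁻¹' P.final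

variable {g : Q' → Q} {q₀ : Q'}

theorem Steps.of_comap {c d : Q' × List Γ} {w : List σ} {h : ℕ}
    (hs : (P.comap g q₀).Steps c w d h) : P.Steps (g c.1, c.2) w (g d.1, d.2) h := by
  induction hs with
  | refl => exact Steps.refl _
  | step ht ha _ ih => exact Steps.step ht ha ih

theorem Steps.exists_comap (hg : ∀ t ∈ P.trans, t.2.2.2 ∈ Set.range g)
    {c d : Q × List Γ} {w : List σ} {h : ℕ} (hs : P.Steps c w d h) {q : Q'} (hq : g q = c.1) :
    ∃ q', g q' = d.1 ∧ (P.comap g q₀).Steps (q, c.2) w (q', d.2) h := by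
  induction hs generalizing q with
  | refl => exact ⟨q, hq, Steps.refl _⟩
  | step ht ha _ ih =>
    obtain ⟨q₁, hq₁⟩ := hg _ ht
    obtain ⟨q', hq', hs'⟩ := ih hq₁
    refine ⟨q', hq', Steps.step ?_ ha hs'⟩
    simpa [comap, hq, hq₁] using ht

theorem language_comap (hg : ∀ t ∈ P.trans, t.2.2.2 ∈ Set.range g) (h₀ : g q₀ = P.start) :
    (P.comap g q₀).language = P.language := by
  ext w
  constructor
  · rintro ⟨f, hf, h, hs⟩
    exact ⟨g f, hf, h, h₀ ▸ hs.of_comap⟩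
  · rintro ⟨f, hf, h, hs⟩
    obtain ⟨f', rfl, hs'⟩ := hs.exists_comap hg h₀
    exact ⟨f', hf, h, hs'⟩

end PDA

inductive CountingState
  | down (k : ℕ)
  | turn (k : ℕ)
  | up (k : ℕ)

namespace CountingState

/-- `pending k s` counts the letters still owed to the halves recorded in `s`: a `0` at depth `i`
stands for an unfinished second half of `2 ^ (k + i)` letters. -/
def pending : ℕ → List (Fin 2) → ℕ
  | _, [] => 0
  | k, b :: s => (if b = 0 then 2 ^ k else 0) + pending (k + 1) s

def remaining : CountingState × List (Fin 2) → ℕ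
  | (down k, s) => 2 ^ k + pending k s
  | (turn k, s) => 2 ^ k + pending (k + 1) s
  | (up k, s) => pending k s

def WellFormed (n : ℕ) : CountingState × List (Fin 2) → Prop
  | (down k, s) => s.length + k = n
  | (turn k, s) => s.length + k + 1 = n
  | (up k, s) => s.length + k = n

theorem length_le_of_wellFormed {n : ℕ} :
    ∀ c : CountingState × List (Fin 2), WellFormed n c → c.2.length ≤ n
  | (down _, _), h | (turn _, _), h | (up _, _), h => by simp only [WellFormed] at h ⊢; omega

def decode (n : ℕ) (i : Fin (3 * n + 2)) : CountingState :=
  if i ≤ n then down i else if i ≤ 2 * n + 1 then up (i - (n + 1)) else turn (i - (2 * n + 2))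

variable {n k : ℕ}

theorem decode_down (hk : k ≤ n) : decode n ⟨k, by omega⟩ = down k := by
  simp [decode, hk]

theorem decode_up (hk : k ≤ n) : decode n ⟨n + 1 + k, by omega⟩ = up k := by
  simp [decode, show ¬n + 1 + k ≤ n by omega, show n + 1 + k ≤ 2 * n + 1 by omega]

theorem decode_turn (hk : k < n) : decode n ⟨2 * n + 2 + k, by omega⟩ = turn k := by
  simp [decode, show ¬2 * n + 2 + k ≤ n by omega, show ¬2 * n + 2 + k ≤ 2 * n + 1 by omega]

end CountingState

open CountingState

inductive CountingTrans (n : ℕ) (σ : Type*) :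
    CountingState × Option σ × StackOp (Fin 2) × CountingState → Prop
  | push_zero {k : ℕ} : k < n → CountingTrans n σ (down (k + 1), none, .push 0, down k)
  | read (a : σ) : CountingTrans n σ (down 0, some a, .nop, up 0)
  | pop_zero {k : ℕ} : k < n → CountingTrans n σ (up k, none, .pop 0, turn k)
  | push_one {k : ℕ} : k < n → CountingTrans n σ (turn k, none, .push 1, down k)
  | pop_one {k : ℕ} : k < n → CountingTrans n σ (up k, none, .pop 1, up (k + 1))

def countingPDA (n : ℕ) (σ : Type*) : PDA CountingState (Fin 2) σ where
  trans := {t | CountingTrans n σ t}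
  start := down n
  final := {up n}

section countingPDA

variable {n : ℕ} {σ : Type*}

theorem countingPDA_reads_block {k : ℕ} (hk : k ≤ n) (s : List (Fin 2)) (w : List σ)
    (hw : w.length = 2 ^ k) : ∃ h, (countingPDA n σ).Steps (down k, s) w (up k, s) h := by
  induction k generalizing s w with
  | zero =>
    obtain ⟨a, rfl⟩ := List.length_eq_one_iff.mp hw
    exact ⟨_, .step (P := countingPDA n σ) (CountingTrans.read a) rfl (.refl _)⟩
  | succ k ih =>
    have hkn : k < n := hk
    rw [← List.take_append_drop (2 ^ k) w]
    obtain ⟨h₁, first⟩ := ih hkn.le (0 :: s) (w.take (2 ^ k)) (by simp [hw, pow_succ])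
    obtain ⟨h₂, second⟩ := ih hkn.le (1 :: s) (w.drop (2 ^ k)) (by simp [hw, pow_succ]; omega)
    have finish := second.trans (.step (CountingTrans.pop_one hkn) rfl (.refl (up (k + 1), s)))
    have middle := PDA.Steps.step (P := countingPDA n σ) (CountingTrans.pop_zero hkn) rfl
      (.step (CountingTrans.push_one hkn) rfl finish)
    exact ⟨_, by
      simpa using PDA.Steps.step (P := countingPDA n σ) (CountingTrans.push_zero hkn) rfl
        (first.trans middle)⟩

theorem countingPDA_remaining_eq {c d : CountingState × List (Fin 2)} {w : List σ} {h : ℕ}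
    (hs : (countingPDA n σ).Steps c w d h) : remaining c = w.length + remaining d := by
  refine hs.potential_eq_length_add remaining ?_
  rintro q a op q' s s' (_ | _ | _ | _ | _) rfl <;>
    simp [remaining, pending, pow_succ, mul_two, add_assoc]

theorem countingPDA_height_le {c : CountingState × List (Fin 2)} {w : List σ} {h : ℕ}
    (hs : (countingPDA n σ).Steps (down n, []) w c h) : h ≤ n := by
  refine hs.height_le_of_invariant (WellFormed n) ?_ length_le_of_wellFormed (by simp [WellFormed])
  rintro q a op q' s s' (_ | _ | _ | _ | _) rfl <;> simp [WellFormed] <;> omega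

theorem countingPDA_language : (countingPDA n σ).language = {w | w.length = 2 ^ n} := by
  ext w
  constructor
  · rintro ⟨f, rfl, h, hs⟩
    simpa [countingPDA, remaining, pending] using (countingPDA_remaining_eq hs).symm
  · intro hw
    exact ⟨up n, rfl, countingPDA_reads_block le_rfl [] w hw⟩

theorem countingPDA_targets_mem_range_decode :
    ∀ t ∈ (countingPDA n σ).trans, t.2.2.2 ∈ Set.range (decode n) := by
  rintro t (@⟨k, hk⟩ | a | @⟨k, hk⟩ | @⟨k, hk⟩ | @⟨k, hk⟩)
  exacts [⟨_, decode_down hk.le⟩, ⟨_, decode_up n.zero_le⟩, ⟨_, decode_turn hk⟩,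
    ⟨_, decode_down hk.le⟩, ⟨_, decode_up hk⟩]

end countingPDA

theorem exists_pda_counting_exp_general (n : ℕ) (Γ₂ : Type) :
    ∃ P : PDA (Fin (3 * n + 2)) (Fin 2) Γ₂,
      P.language = {w : List Γ₂ | w.length = 2 ^ n} ∧
      ∀ (w : List Γ₂) (f : Fin (3 * n + 2)) (h : ℕ),
        f ∈ P.final → P.Steps (P.start, []) w (f, []) h → h ≤ n := by
  have hstart : decode n ⟨n, by omega⟩ = (countingPDA n Γ₂).start := decode_down le_rfl
  refine ⟨(countingPDA n Γ₂).comap (decode n) ⟨n, by omega⟩, ?_, ?_⟩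
  · rw [PDA.language_comap countingPDA_targets_mem_range_decode hstart, countingPDA_language]
  · intro w f h _ hs
    exact countingPDA_height_le (hstart ▸ hs.of_comap)

/-- for every `n ≥ 1` there is a PDA with `3n+2` states and two stack
symbols accepting exactly the words of length `2^n` over the input alphabet `Γ₂`,
and along any accepting run the stack height never exceeds `n`. -/
theorem exists_pda_counting_exp (n : ℕ) (hn : 1 ≤ n) (Γ₂ : Type) :
    ∃ P : PDA (Fin (3 * n + 2)) (Fin 2) Γ₂,
      P.language = {w : List Γ₂ | w.length = 2 ^ n} ∧
      ∀ (w : List Γ₂) (f : Fin (3 * n + 2)) (h : ℕ),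
        f ∈ P.final → P.Steps (P.start, []) w (f, []) h → h ≤ n :=
  exists_pda_counting_exp_general n Γ₂
end

section
/- Let G be a context-free grammar in Chomsky normal form with N nonterminals, and let w be a word generated by G. Then there exists a word w' generated by G such that w' is a scattered subword of w and |w'| ≤ 2^N. -/
/-!
A derivation of `w` in a grammar in Chomsky normal form is a binary parse tree. Whenever a node
labelled `A` has a descendant labelled `A`, replacing the node by the lower subtree gives again a
parse tree, whose yield is a scattered subword of the old one. Doing this bottom-up leaves a tree
in which no nonterminal repeats along a path; its height is then less than the number of
nonterminals, and a binary tree of height `h` has at most `2 ^ h` leaves.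
-/

open ContextFreeGrammar

/-- Chomsky normal form without the restriction that only the initial nonterminal may be erased. -/
def ContextFreeRule.HasChomskyOutput {T N : Type*} (r : ContextFreeRule T N) : Prop :=
  (∃ B C : N, r.output = [.nonterminal B, .nonterminal C]) ∨
    (∃ a : T, r.output = [.terminal a]) ∨ r.output = []

inductive ParseTree (T V : Type*) : Type _
  | leaf (A : V) (a : T)
  | eps (A : V)
  | node (A : V) (l r : ParseTree T V)

namespace ParseTree

variable {T V : Type*}

def root : ParseTree T V → V
  | leaf A _ | eps A | node A _ _ => A

def yield : ParseTree T V → List T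
  | leaf _ a => [a]
  | eps _ => []
  | node _ l r => l.yield ++ r.yield

def height : ParseTree T V → ℕ
  | leaf _ _ | eps _ => 0
  | node _ l r => max l.height r.height + 1

theorem length_yield_le_two_pow_height (t : ParseTree T V) : t.yield.length ≤ 2 ^ t.height := by
  induction t with
  | leaf | eps => simp [yield, height]
  | node A l r ihl ihr =>
    calc (node A l r).yield.length = l.yield.length + r.yield.length := List.length_append
      _ ≤ 2 ^ max l.height r.height + 2 ^ max l.height r.height := by
        gcongr
        exacts [ihl.trans (Nat.pow_le_pow_right two_pos (le_max_left ..)),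
          ihr.trans (Nat.pow_le_pow_right two_pos (le_max_right ..))]
      _ = 2 ^ (node A l r).height := by rw [height, pow_succ, mul_two]

inductive IsSubtree : ParseTree T V → ParseTree T V → Prop
  | refl (t : ParseTree T V) : IsSubtree t t
  | left {s l : ParseTree T V} (A : V) (r : ParseTree T V) :
      IsSubtree s l → IsSubtree s (node A l r)
  | right {s r : ParseTree T V} (A : V) (l : ParseTree T V) :
      IsSubtree s r → IsSubtree s (node A l r)

theorem IsSubtree.trans {s t u : ParseTree T V} (hst : IsSubtree s t) (htu : IsSubtree t u) :
    IsSubtree s u := by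
  induction htu with
  | refl => exact hst
  | left A r _ ih => exact .left A r ih
  | right A l _ ih => exact .right A l ih

theorem IsSubtree.yield_sublist {s t : ParseTree T V} (h : IsSubtree s t) :
    s.yield.Sublist t.yield := by
  induction h with
  | refl => exact .refl _
  | left _ _ _ ih => exact ih.trans (List.sublist_append_left ..)
  | right _ _ _ ih => exact ih.trans (List.sublist_append_right ..)

section Nonterminals

variable [DecidableEq V]

def nonterminals : ParseTree T V → Finset V
  | leaf A _ | eps A => {A}
  | node A l r => insert A (l.nonterminals ∪ r.nonterminals)

theorem root_mem_nonterminals (t : ParseTree T V) : t.root ∈ t.nonterminals := by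
  cases t <;> simp [root, nonterminals]

theorem IsSubtree.nonterminals_subset {s t : ParseTree T V} (h : IsSubtree s t) :
    s.nonterminals ⊆ t.nonterminals := by
  induction h with
  | refl => exact subset_rfl
  | left _ _ _ ih =>
    exact ih.trans (Finset.subset_union_left.trans (Finset.subset_insert ..))
  | right _ _ _ ih =>
    exact ih.trans (Finset.subset_union_right.trans (Finset.subset_insert ..))

theorem exists_isSubtree_root_eq {A : V} {t : ParseTree T V} (h : A ∈ t.nonterminals) :
    ∃ s, IsSubtree s t ∧ s.root = A := by
  induction t with
  | leaf B a | eps B =>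
    exact ⟨_, .refl _, (Finset.mem_singleton.mp h).symm⟩
  | node B l r ihl ihr =>
    simp only [nonterminals, Finset.mem_insert, Finset.mem_union] at h
    rcases h with rfl | hl | hr
    · exact ⟨_, .refl _, rfl⟩
    · obtain ⟨s, hs, rfl⟩ := ihl hl
      exact ⟨s, hs.left _ _, rfl⟩
    · obtain ⟨s, hs, rfl⟩ := ihr hr
      exact ⟨s, hs.right _ _, rfl⟩

def NoRepeat : ParseTree T V → Prop
  | leaf _ _ | eps _ => True
  | node A l r => A ∉ l.nonterminals ∧ A ∉ r.nonterminals ∧ l.NoRepeat ∧ r.NoRepeat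

theorem IsSubtree.noRepeat {s t : ParseTree T V} (h : IsSubtree s t) (ht : t.NoRepeat) :
    s.NoRepeat := by
  induction h with
  | refl => exact ht
  | left _ _ _ ih => exact ih ht.2.2.1
  | right _ _ _ ih => exact ih ht.2.2.2

theorem NoRepeat.height_lt_card_nonterminals {t : ParseTree T V} (ht : t.NoRepeat) :
    t.height < t.nonterminals.card := by
  induction t with
  | leaf | eps => simp [height, nonterminals]
  | node A l r ihl ihr =>
    obtain ⟨hAl, hAr, hl, hr⟩ := ht
    have hcard_lt (s : ParseTree T V) (hs : IsSubtree s (node A l r)) (hA : A ∉ s.nonterminals) :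
        s.nonterminals.card < (node A l r).nonterminals.card :=
      Finset.card_lt_card (Finset.ssubset_iff_subset_ne.mpr ⟨hs.nonterminals_subset,
        fun h ↦ hA (h ▸ root_mem_nonterminals (node A l r))⟩)
    have hcard_l := hcard_lt l (.left _ _ (.refl _)) hAl
    have hcard_r := hcard_lt r (.right _ _ (.refl _)) hAr
    have hheight_l := ihl hl
    have hheight_r := ihr hr
    simp only [height]
    omega

end Nonterminals

def IsValid (g : ContextFreeGrammar T) : ParseTree T g.NT → Prop
  | leaf A a => ⟨A, [.terminal a]⟩ ∈ g.rules
  | eps A => ⟨A, []⟩ ∈ g.rules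
  | node A l r =>
    ⟨A, [.nonterminal l.root, .nonterminal r.root]⟩ ∈ g.rules ∧ l.IsValid g ∧ r.IsValid g

section Grammar

variable {g : ContextFreeGrammar T}

theorem IsSubtree.isValid {s t : ParseTree T g.NT} (h : IsSubtree s t)
    (ht : t.IsValid g) : s.IsValid g := by
  induction h with
  | refl => exact ht
  | left _ _ _ ih => exact ih ht.2.1
  | right _ _ _ ih => exact ih ht.2.2

theorem IsValid.derives {t : ParseTree T g.NT} (ht : t.IsValid g) :
    g.Derives [.nonterminal t.root] (t.yield.map .terminal) := by
  induction t with
  | leaf | eps => exact Produces.single ⟨_, ht, .input_output⟩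
  | node A l r ihl ihr =>
    obtain ⟨hrule, hl, hr⟩ := ht
    have hsplit : g.Derives [.nonterminal l.root, .nonterminal r.root]
        (l.yield.map .terminal ++ r.yield.map .terminal) :=
      ((ihl hl).append_right [.nonterminal r.root]).trans ((ihr hr).append_left _)
    simpa [yield, root] using Produces.trans_derives ⟨_, hrule, .input_output⟩ hsplit

theorem IsValid.exists_noRepeat [DecidableEq g.NT] {t : ParseTree T g.NT} (ht : t.IsValid g) :
    ∃ t' : ParseTree T g.NT, t'.IsValid g ∧ t'.root = t.root ∧ t'.yield.Sublist t.yield ∧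
      t'.nonterminals ⊆ t.nonterminals ∧ t'.NoRepeat := by
  induction t with
  | leaf | eps => exact ⟨_, ht, rfl, .refl _, subset_rfl, trivial⟩
  | node A l r ihl ihr =>
    obtain ⟨hrule, hl, hr⟩ := ht
    obtain ⟨l', hl', hroot_l, hsub_l, hnt_l, hnr_l⟩ := ihl hl
    obtain ⟨r', hr', hroot_r, hsub_r, hnt_r, hnr_r⟩ := ihr hr
    have hvalid : (node A l' r').IsValid g := ⟨by rwa [hroot_l, hroot_r], hl', hr'⟩
    have hsub : (node A l' r').yield.Sublist (node A l r).yield := hsub_l.append hsub_r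
    have hnt : (node A l' r').nonterminals ⊆ (node A l r).nonterminals :=
      Finset.insert_subset_insert _ (Finset.union_subset_union hnt_l hnt_r)
    by_cases hA : A ∈ l'.nonterminals ∨ A ∈ r'.nonterminals
    · obtain ⟨c, hc, hnr_c, hA⟩ :
          ∃ c, IsSubtree c (node A l' r') ∧ c.NoRepeat ∧ A ∈ c.nonterminals := by
        rcases hA with hA | hA
        exacts [⟨l', .left _ _ (.refl _), hnr_l, hA⟩, ⟨r', .right _ _ (.refl _), hnr_r, hA⟩]
      obtain ⟨s, hs, hroot⟩ := exists_isSubtree_root_eq hA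
      exact ⟨s, (hs.trans hc).isValid hvalid, hroot, (hs.trans hc).yield_sublist.trans hsub,
        (hs.trans hc).nonterminals_subset.trans hnt, hs.noRepeat hnr_c⟩
    · rw [not_or] at hA
      exact ⟨_, hvalid, rfl, hsub, hnt, hA.1, hA.2, hnr_l, hnr_r⟩

end Grammar

end ParseTree

namespace ContextFreeGrammar

variable {T : Type*} {g : ContextFreeGrammar T}

/-- `HasParseForest g u w`: each nonterminal of the sentential form `u` is the root of a parse tree
of `g`, and the concatenation of their yields, with the terminals of `u` in between, is `w`. -/
inductive HasParseForest (g : ContextFreeGrammar T) : List (Symbol T g.NT) → List T → Prop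
  | nil : HasParseForest g [] []
  | cons_terminal (a : T) {u : List (Symbol T g.NT)} {w : List T} :
      HasParseForest g u w → HasParseForest g (.terminal a :: u) (a :: w)
  | cons_nonterminal {t : ParseTree T g.NT} {A : g.NT} {u : List (Symbol T g.NT)} {w : List T} :
      t.IsValid g → t.root = A → HasParseForest g u w →
        HasParseForest g (.nonterminal A :: u) (t.yield ++ w)

namespace HasParseForest

theorem map_terminal (w : List T) : HasParseForest g (w.map .terminal) w := by
  induction w with
  | nil => exact nil
  | cons a w ih => exact cons_terminal a ih

theorem append {u v : List (Symbol T g.NT)} {w₁ w₂ : List T} (hu : HasParseForest g u w₁)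
    (hv : HasParseForest g v w₂) : HasParseForest g (u ++ v) (w₁ ++ w₂) := by
  induction hu with
  | nil => exact hv
  | cons_terminal a _ ih => exact cons_terminal a ih
  | cons_nonterminal ht hroot _ ih => simpa using cons_nonterminal ht hroot ih

theorem exists_of_append {u v : List (Symbol T g.NT)} {w : List T}
    (h : HasParseForest g (u ++ v) w) :
    ∃ w₁ w₂, w = w₁ ++ w₂ ∧ HasParseForest g u w₁ ∧ HasParseForest g v w₂ := by
  induction u generalizing w with
  | nil => exact ⟨[], w, rfl, nil, h⟩
  | cons x u ih =>
    cases h with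
    | cons_terminal a h =>
      obtain ⟨w₁, w₂, rfl, h₁, h₂⟩ := ih h
      exact ⟨a :: w₁, w₂, rfl, cons_terminal a h₁, h₂⟩
    | cons_nonterminal ht hroot h =>
      obtain ⟨w₁, w₂, rfl, h₁, h₂⟩ := ih h
      exact ⟨_ ++ w₁, w₂, (List.append_assoc ..).symm, cons_nonterminal ht hroot h₁, h₂⟩

theorem exists_isValid_of_output {r : ContextFreeRule T g.NT} (hr : r ∈ g.rules)
    (hshape : r.HasChomskyOutput) {w : List T} (h : HasParseForest g r.output w) :
    ∃ t : ParseTree T g.NT, t.IsValid g ∧ t.root = r.input ∧ t.yield = w := by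
  obtain ⟨input, output⟩ := r
  rcases hshape with ⟨B, C, rfl⟩ | ⟨a, rfl⟩ | rfl
  · rcases h with _ | _ | ⟨hB, rfl, _ | _ | ⟨hC, rfl, _ | _⟩⟩
    exact ⟨.node input _ _, ⟨hr, hB, hC⟩, rfl, by simp [ParseTree.yield]⟩
  · rcases h with _ | ⟨_, _ | _⟩
    exact ⟨.leaf input a, hr, rfl, rfl⟩
  · cases h
    exact ⟨.eps input, hr, rfl, rfl⟩

theorem of_produces (hg : ∀ r ∈ g.rules, r.HasChomskyOutput) {u v : List (Symbol T g.NT)}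
    {w : List T} (huv : g.Produces u v) (hv : HasParseForest g v w) : HasParseForest g u w := by
  obtain ⟨r, hr, hrw⟩ := huv
  obtain ⟨p, q, rfl, rfl⟩ := hrw.exists_parts
  obtain ⟨w₁₂, w₃, rfl, h₁₂, h₃⟩ := hv.exists_of_append
  obtain ⟨w₁, w₂, rfl, h₁, h₂⟩ := h₁₂.exists_of_append
  obtain ⟨t, ht, hroot, rfl⟩ := exists_isValid_of_output hr (hg r hr) h₂
  simpa using (h₁.append (cons_nonterminal ht hroot nil)).append h₃

theorem of_derives (hg : ∀ r ∈ g.rules, r.HasChomskyOutput) {u v : List (Symbol T g.NT)}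
    {w : List T} (huv : g.Derives u v) (hv : HasParseForest g v w) : HasParseForest g u w := by
  induction huv using Relation.ReflTransGen.head_induction_on with
  | refl => exact hv
  | head hstep _ ih => exact of_produces hg hstep ih

end HasParseForest

theorem exists_isValid_of_derives (hg : ∀ r ∈ g.rules, r.HasChomskyOutput) {A : g.NT}
    {w : List T} (h : g.Derives [.nonterminal A] (w.map .terminal)) :
    ∃ t : ParseTree T g.NT, t.IsValid g ∧ t.root = A ∧ t.yield = w := by
  rcases (HasParseForest.map_terminal w).of_derives hg h with _ | _ | ⟨ht, hroot, _ | _⟩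
  exact ⟨_, ht, hroot, (List.append_nil _).symm⟩

end ContextFreeGrammar

/-- a CFG in Chomsky normal form with `N` nonterminals generating `w`
also generates a scattered subword `w'` of `w` with `|w'| ≤ 2^N`. -/
theorem cnf_small_subword {T : Type} (g : ContextFreeGrammar T) [Fintype g.NT]
    (N : ℕ) (hN : Fintype.card g.NT = N)
    (hCNF : ∀ r ∈ g.rules,
      (∃ B C : g.NT, r.output = [Symbol.nonterminal B, Symbol.nonterminal C]) ∨
      (∃ a : T, r.output = [Symbol.terminal a]) ∨
      (r.input = g.initial ∧ r.output = []))
    (w : List T) (hw : w ∈ g.language) :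
    ∃ w' : List T, w' ∈ g.language ∧ w'.Sublist w ∧ w'.length ≤ 2 ^ N := by
  classical
  have hg (r) (hr : r ∈ g.rules) : r.HasChomskyOutput := (hCNF r hr).imp_right (.imp_right (·.2))
  obtain ⟨t, ht, hroot, rfl⟩ := exists_isValid_of_derives hg ((mem_language_iff g w).mp hw)
  obtain ⟨t', ht', hroot', hsub, -, hnr⟩ := ht.exists_noRepeat
  have hheight : t'.height ≤ N :=
    hN ▸ (hnr.height_lt_card_nonterminals.trans_le (Finset.card_le_univ _)).le
  refine ⟨t'.yield, (mem_language_iff g _).mpr ?_, hsub, ?_⟩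
  · simpa only [hroot', hroot] using ht'.derives
  · exact t'.length_yield_le_two_pow_height.trans (Nat.pow_le_pow_right two_pos hheight)
end

section
/- If u₁' ⪯ u₁, ..., u_n' ⪯ u_n (each a scattered subword) and w ∈ Shuffle({u₁', ..., u_n'}), then there exists w' ∈ Shuffle({u₁, ..., u_n}) with w ⪯ w'. -/
/-- `IsShuffle w us` : the positions of `w` can be partitioned (by a labelling
function `f`) so that the projection of `w` to the positions labelled `i`
equals the `i`-th word of `us`. -/
def IsShuffle {α : Type*} (w : List α) (us : List (List α)) : Prop :=
  ∃ f : Fin w.length → Fin us.length,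
    ∀ i : Fin us.length,
      (((List.finRange w.length).filter fun k => decide (f k = i)).map w.get) = us.get i

section Aux

/-- Binary interleaving of two words. -/
inductive Interleave {α : Type*} : List α → List α → List α → Prop where
  | nil : Interleave [] [] []
  | left {a u v w} : Interleave u v w → Interleave (a :: u) v (a :: w)
  | right {a u v w} : Interleave u v w → Interleave u (a :: v) (a :: w)

/-- Structural (inductive) version of the n-ary shuffle. -/
inductive Shuf {α : Type*} : List (List α) → List α → Prop where
  | nil : Shuf [] []
  | cons {u us v w} : Interleave u v w → Shuf us v → Shuf (u :: us) w

theorem Interleave.swap {α : Type*} {u v w : List α} (h : Interleave u v w) :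
    Interleave v u w := by
  induction h with
  | nil => exact .nil
  | left _ ih => exact .right ih
  | right _ ih => exact .left ih

theorem Interleave.nil_right {α : Type*} (u : List α) : Interleave u [] u := by
  induction u with
  | nil => exact .nil
  | cons a t ih => exact .left ih

theorem Interleave.insert_left {α : Type*} {u' v w : List α}
    (h : Interleave u' v w) : ∀ u : List α, u'.Sublist u →
    ∃ w', Interleave u v w' ∧ w.Sublist w' := by
  induction h with
  | nil =>
    intro u hu
    exact ⟨u, Interleave.nil_right u, List.nil_sublist u⟩
  | @left a u'' v w₀ _ ih =>
    intro u hu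
    induction u with
    | nil => exact absurd hu (by simp)
    | cons b t iht =>
      rcases List.cons_sublist_cons'.mp hu with h | ⟨rfl, h⟩
      · obtain ⟨w', hw', hsub⟩ := iht h
        exact ⟨b :: w', .left hw', hsub.trans (List.sublist_cons_self b w')⟩
      · obtain ⟨w', hw', hsub⟩ := ih t h
        exact ⟨a :: w', .left hw', hsub.cons₂ a⟩
  | @right b u' v₀ w₀ _ ih =>
    intro u hu
    obtain ⟨w', hw', hsub⟩ := ih u hu
    exact ⟨b :: w', .right hw', hsub.cons₂ b⟩

theorem Interleave.insert_right {α : Type*} {u v' w : List α}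
    (h : Interleave u v' w) (v : List α) (hv : v'.Sublist v) :
    ∃ w', Interleave u v w' ∧ w.Sublist w' := by
  obtain ⟨w', hw', hs⟩ := h.swap.insert_left v hv
  exact ⟨w', hw'.swap, hs⟩

theorem shuf_nil_of_all_nil {α : Type*} (us : List (List α))
    (h : ∀ u ∈ us, u = []) : Shuf us [] := by
  induction us with
  | nil => exact .nil
  | cons u t ih =>
    have := h u (by simp)
    subst this
    exact .cons .nil (ih fun u hu => h u (by simp [hu]))

theorem all_nil_of_shuf_nil {α : Type*} (us : List (List α))
    (h : Shuf us []) : ∀ u ∈ us, u = [] := by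
  induction us with
  | nil => simp
  | cons u t ih =>
    cases h with
    | cons hil hs =>
      cases hil with
      | nil =>
        intro x hx
        rcases List.mem_cons.mp hx with rfl | hx
        · rfl
        · exact ih hs x hx

theorem shuf_cons_of_set {α : Type*} (us : List (List α)) (j : ℕ) (a : α)
    (r : List α) (w : List α) (hget : ∃ hj : j < us.length, us[j] = a :: r)
    (h : Shuf (us.set j r) w) : Shuf us (a :: w) := by
  induction us generalizing j w with
  | nil => exact absurd hget.1 (by simp)
  | cons u t ih =>
    cases j with
    | zero =>
      obtain ⟨hj, hg⟩ := hget
      simp at hg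
      subst hg
      cases h with
      | cons hil hs => exact .cons (.left hil) hs
    | succ j' =>
      obtain ⟨hj, hg⟩ := hget
      simp only [List.set_cons_succ] at h
      cases h with
      | cons hil hs =>
        exact .cons (.right hil) (ih j' _ ⟨by simpa using hj, by simpa using hg⟩ hs)

theorem shuf_decomp {α : Type*} (us : List (List α)) (a : α) (w : List α)
    (h : Shuf us (a :: w)) : ∃ j r, (∃ hj : j < us.length, us[j] = a :: r) ∧
      Shuf (us.set j r) w := by
  induction us generalizing w with
  | nil => cases h
  | cons u t ih =>
    cases h with
    | @cons _ _ v _ hil hs =>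
      cases hil with
      | @left _ u₀ _ _ h₀ =>
        exact ⟨0, u₀, ⟨by simp, by simp⟩, .cons h₀ hs⟩
      | @right _ _ v₀ _ h₀ =>
        obtain ⟨j, r, ⟨hj, hg⟩, hs'⟩ := ih _ hs
        exact ⟨j + 1, r, ⟨by simpa using hj, by simpa using hg⟩,
          .cons h₀ hs'⟩

theorem shuffle_filter_cons {α : Type*} {m : ℕ} (a : α) (w : List α)
    (g : Fin (w.length + 1) → Fin m) (i : Fin m) :
    ((List.finRange (w.length + 1)).filter (fun k => decide (g k = i))).map
        ((a::w).get : Fin (w.length + 1) → α)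
    = (if g 0 = i then [a] else [])
      ++ ((List.finRange w.length).filter (fun k => decide (g k.succ = i))).map w.get := by
  rw [List.finRange_succ, List.filter_cons, List.filter_map]
  have h1 : ((a::w).get : Fin (w.length + 1) → α) ∘ Fin.succ = w.get := by
    funext k
    simp [List.get_eq_getElem]
  have h2 : ((fun k => decide (g k = i)) ∘ Fin.succ) = fun k => decide (g k.succ = i) := rfl
  rw [h2]
  by_cases h : g 0 = i
  · simp [h, List.map_map, h1]
  · simp [h, List.map_map, h1]

theorem isShuffle_cons_ex {α : Type*} (a : α) (w : List α) (us : List (List α)) :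
    IsShuffle (a :: w) us ↔
      ∃ f : Fin (w.length + 1) → Fin us.length,
        ∀ i : Fin us.length,
          (((List.finRange (w.length + 1)).filter fun k => decide (f k = i)).map
            ((a::w).get : Fin (w.length + 1) → α)) = us.get i :=
  Iff.rfl

set_option linter.unnecessarySimpa false in
theorem isShuffle_cons_iff {α : Type*} (a : α) (w : List α) (us : List (List α)) :
    IsShuffle (a :: w) us ↔
      ∃ j r, (∃ hj : j < us.length, us[j] = a :: r) ∧ IsShuffle w (us.set j r) := by
  rw [isShuffle_cons_ex]
  constructor
  · rintro ⟨f, hf⟩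
    have hj : (f 0).1 < us.length := (f 0).2
    have hget : us[(f 0).1] = a :: ((List.finRange w.length).filter
        (fun k => decide (f k.succ = f 0))).map w.get := by
      have h0 := hf (f 0)
      rw [shuffle_filter_cons a w f (f 0), if_pos rfl, List.get_eq_getElem] at h0
      exact h0.symm
    refine ⟨(f 0).1, _, ⟨hj, hget⟩,
      fun k => ⟨(f k.succ).1, by simpa using (f k.succ).2⟩, fun i' => ?_⟩
    have hi : i'.1 < us.length := by simpa using i'.2
    rw [List.filter_congr (l := List.finRange w.length)
      (q := fun k => decide (f k.succ = ⟨i'.1, hi⟩))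
      (fun k _ => by simp [Fin.ext_iff])]
    by_cases hcase : i'.1 = (f 0).1
    · have he : (⟨i'.1, hi⟩ : Fin us.length) = f 0 := Fin.ext hcase
      obtain rfl : i' = ⟨(f 0).1, by simpa using hj⟩ := Fin.ext hcase
      rw [he, List.get_eq_getElem]
      simp [List.getElem_set_self]
    · have hfi := hf ⟨i'.1, hi⟩
      have hne : ¬ (f 0 = (⟨i'.1, hi⟩ : Fin us.length)) :=
        fun hc => hcase ((congrArg Fin.val hc).symm)
      rw [shuffle_filter_cons a w f ⟨i'.1, hi⟩, if_neg hne, List.nil_append] at hfi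
      rw [hfi, List.get_eq_getElem, List.get_eq_getElem,
        List.getElem_set_ne (fun hc => hcase hc.symm)]
  · rintro ⟨j, r, ⟨hj, hg⟩, f, hf⟩
    refine ⟨Fin.cases ⟨j, hj⟩ (fun k => ⟨(f k).1, by simpa using (f k).2⟩), fun i => ?_⟩
    rw [shuffle_filter_cons]
    simp only [Fin.cases_zero, Fin.cases_succ]
    have hi' : i.1 < (us.set j r).length := by simpa using i.2
    rw [List.filter_congr (l := List.finRange w.length)
      (q := fun k => decide (f k = ⟨i.1, hi'⟩))
      (fun k _ => by simp [Fin.ext_iff])]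
    rw [hf ⟨i.1, hi'⟩]
    by_cases hcase : i.1 = j
    · obtain rfl : i = ⟨j, hj⟩ := Fin.ext hcase
      erw [if_pos rfl]
      rw [List.get_eq_getElem, List.get_eq_getElem]
      simp [List.getElem_set_self, hg]
    · have hne : ¬ ((⟨j, hj⟩ : Fin us.length) = i) :=
        fun hc => hcase ((congrArg Fin.val hc).symm)
      erw [if_neg hne]
      rw [List.get_eq_getElem, List.get_eq_getElem,
        List.getElem_set_ne (fun hc => hcase hc.symm), List.nil_append]

theorem isShuffle_nil_iff {α : Type*} (us : List (List α)) :
    IsShuffle ([] : List α) us ↔ ∀ u ∈ us, u = [] := by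
  constructor
  · rintro ⟨f, hf⟩ u hu
    obtain ⟨i, rfl⟩ := List.get_of_mem hu
    rw [← hf i]
    simp [show ([] : List α).length = 0 from rfl, List.finRange_zero]
  · intro h
    refine ⟨fun k => k.elim0, fun i => ?_⟩
    have : us.get i = [] := h _ (List.get_mem us i)
    rw [this]
    simp [show ([] : List α).length = 0 from rfl, List.finRange_zero]

theorem isShuffle_iff_shuf {α : Type*} (w : List α) (us : List (List α)) :
    IsShuffle w us ↔ Shuf us w := by
  induction w generalizing us with
  | nil =>
    rw [isShuffle_nil_iff]
    exact ⟨shuf_nil_of_all_nil us, all_nil_of_shuf_nil us⟩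
  | cons a w ih =>
    rw [isShuffle_cons_iff]
    constructor
    · rintro ⟨j, r, hget, hsh⟩
      exact shuf_cons_of_set us j a r w hget ((ih _).mp hsh)
    · intro h
      obtain ⟨j, r, hget, hs⟩ := shuf_decomp us a w h
      exact ⟨j, r, hget, (ih _).mpr hs⟩

theorem shuf_insert {α : Type*} (us' us : List (List α))
    (hsub : List.Forall₂ List.Sublist us' us) :
    ∀ w, Shuf us' w → ∃ w', Shuf us w' ∧ w.Sublist w' := by
  induction hsub with
  | nil =>
    intro w hw
    cases hw
    exact ⟨[], .nil, List.Sublist.refl []⟩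
  | @cons u' u t' t hu _ ih =>
    intro w hw
    cases hw with
    | cons hil hs =>
      obtain ⟨v', hv', hvs⟩ := ih _ hs
      obtain ⟨w₁, hw₁, hws₁⟩ := hil.insert_left u hu
      obtain ⟨w', hw', hws₂⟩ := hw₁.insert_right v' hvs
      exact ⟨w', .cons hw' hv', hws₁.trans hws₂⟩

end Aux

/-- a shuffle of scattered subwords is a scattered subword of a
shuffle: if `u_i' ⪯ u_i` for all `i` and `w ∈ Shuffle(u_1', …, u_n')` then
`w ⪯ w'` for some `w' ∈ Shuffle(u_1, …, u_n)`. -/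
theorem shuffle_of_subwords_subword_of_shuffle {α : Type*} (w : List α)
    (us' us : List (List α)) (hsub : List.Forall₂ List.Sublist us' us)
    (hsh : IsShuffle w us') :
    ∃ w' : List α, IsShuffle w' us ∧ w.Sublist w' := by
  obtain ⟨w', hw', hs⟩ := shuf_insert us' us hsub w ((isShuffle_iff_shuf w us').mp hsh)
  exact ⟨w', (isShuffle_iff_shuf w' us).mpr hw', hs⟩
end
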